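/- Let A be a central hyperplane arrangement. If Z ∈ L(A) is a modular element, then the principal ideal ⟨Z⟩ is a modular ideal of L(A). -/

import Mathlib

open Polynomial
open scoped Classical Pointwise

namespace HypArr

variable {K V : Type*} [Field K] [AddCommGroup V] [Module K V] [FiniteDimensional K V]

/-- `A` is an affine hyperplane arrangement: a finite set of affine hyperplanes,
i.e. nonempty affine subspaces of codimension one. -/
def IsArrangement (A : Finset (AffineSubspace K V)) : Prop :=
  ∀ H ∈ A, H ≠ ⊥ ∧ Module.finrank K V = Module.finrank K H.direction + 1

/-- The intersection poset `L(A)`: all nonempty intersections of subfamilies of `A`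
(the empty intersection being the whole space `⊤`).  The order of `L(A)` is *reverse*
inclusion, so `X ≤ Y` in `L(A)` corresponds to `Y ≤ X` as affine subspaces; the
minimal element `0̂` of `L(A)` is the whole space `⊤`. -/
noncomputable def poset (A : Finset (AffineSubspace K V)) : Finset (AffineSubspace K V) :=
  (A.powerset.image fun S => S.inf id).filter (· ≠ ⊥)

/-- The rank of an element of `L(A)`: its codimension in `V`. -/
noncomputable def rk (X : AffineSubspace K V) : ℕ :=
  Module.finrank K V - Module.finrank K X.direction

/-- The rank `r(A)` of the arrangement: the maximal rank of an element of `L(A)`. -/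
noncomputable def rank (A : Finset (AffineSubspace K V)) : ℕ := (poset A).sup rk

/-- An ideal of `L(A)` (with respect to the reverse-inclusion order of `L(A)`):
a downward closed subset of `L(A)`. -/
def IsIdeal (A I : Finset (AffineSubspace K V)) : Prop :=
  I ⊆ poset A ∧ ∀ X ∈ I, ∀ Y ∈ poset A, X ≤ Y → Y ∈ I

/-- The principal ideal `⟨X⟩ = {Y ∈ L(A) : Y ≤ X}` of `L(A)` (in the
reverse-inclusion order of `L(A)`, i.e. `{Y ∈ L(A) : X ⊆ Y}`). -/
noncomputable def principal (A : Finset (AffineSubspace K V)) (X : AffineSubspace K V) :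
    Finset (AffineSubspace K V) :=
  (poset A).filter fun Y => X ≤ Y

/-- The meet `X ∧ Y` in `L(A)`: the greatest element of `L(A)` below both `X` and `Y`
(in the reverse-inclusion order); in terms of affine subspaces it is the smallest
element of `L(A)` containing both `X` and `Y`.  In particular `X ∧ Y = 0̂` iff
`lmeet A X Y = ⊤`. -/
noncomputable def lmeet (A : Finset (AffineSubspace K V)) (X Y : AffineSubspace K V) :
    AffineSubspace K V :=
  sInf {W | W ∈ poset A ∧ X ≤ W ∧ Y ≤ W}

/-- An ideal decomposition `{I_1, …, I_m}` of `L(A)`: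
(I1) for every `X ∈ L(A) \ {0̂}` some `I j ∩ ⟨X⟩` is a nontrivial principal ideal;
(I2) joins `X_1 ∨ ⋯ ∨ X_m` (i.e. intersections) of members of the ideals exist;
(I3) these joins satisfy the rank condition. -/
def IsIdealDecomposition (A : Finset (AffineSubspace K V)) {m : ℕ}
    (I : Fin m → Finset (AffineSubspace K V)) : Prop :=
  (∀ i, IsIdeal A (I i)) ∧
  (∀ X ∈ poset A, X ≠ ⊤ →
    ∃ j, ∃ Z ∈ poset A, Z ≠ ⊤ ∧ I j ∩ principal A X = principal A Z) ∧
  (∀ f : Fin m → AffineSubspace K V, (∀ i, f i ∈ I i) →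
    Finset.univ.inf f ≠ (⊥ : AffineSubspace K V)) ∧
  (∀ f : Fin m → AffineSubspace K V, (∀ i, f i ∈ I i) →
    rk (Finset.univ.inf f) = ∑ i, rk (f i))

/-- The meet-complement `I^c = {Y ∈ L(A) : Y ∧ X = 0̂ for all X ∈ I}`. -/
noncomputable def meetCompl (A I : Finset (AffineSubspace K V)) : Finset (AffineSubspace K V) :=
  (poset A).filter fun Y => ∀ X ∈ I, lmeet A X Y = ⊤

/-- An ideal `I` is modular if `{I, I^c}` is an ideal decomposition of `L(A)`. -/
def IsModularIdeal (A I : Finset (AffineSubspace K V)) : Prop :=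
  IsIdealDecomposition A ![I, meetCompl A I]

/-- `μ` is the Möbius function `μ(0̂, ·)` of the finite intersection poset `P`
(ordered by reverse inclusion, with minimal element the maximal affine subspace in `P`):
the sum of `μ` over an interval `[0̂, X]` is `1` if `X = 0̂` and `0` otherwise. -/
def IsMobiusOn (P : Finset (AffineSubspace K V)) (μ : AffineSubspace K V → ℤ) : Prop :=
  ∀ X ∈ P, ∑ Z ∈ P.filter (fun Z => X ≤ Z), μ Z = if ∀ Z ∈ P, Z ≤ X then 1 else 0

/-- The characteristic polynomial `χ(t) = ∑_{X ∈ P} μ(X) t^{dim X}` of an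
intersection poset `P` with Möbius function `μ`. -/
noncomputable def charPolyOn (P : Finset (AffineSubspace K V)) (μ : AffineSubspace K V → ℤ) :
    Polynomial ℤ :=
  ∑ X ∈ P, C (μ X) * Polynomial.X ^ (Module.finrank K X.direction)

/-- The characteristic polynomial `χ̃(I, t) = ∑_{X ∈ I} μ(X) t^{r(I) - r(X)}` of an ideal. -/
noncomputable def tildeChi (μ : AffineSubspace K V → ℤ) (I : Finset (AffineSubspace K V)) :
    Polynomial ℤ :=
  ∑ X ∈ I, C (μ X) * Polynomial.X ^ (I.sup rk - rk X)

/-- A central arrangement: the intersection of all hyperplanes is nonempty. -/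
def IsCentral (A : Finset (AffineSubspace K V)) : Prop := A.inf id ≠ ⊥

/-- A modular element `Z ∈ L(A)`: `r(Z) + r(X) = r(Z ∧ X) + r(Z ∨ X)` for all `X ∈ L(A)`
(the join `Z ∨ X` being the intersection `Z ⊓ X` of affine subspaces). -/
def IsModularElement (A : Finset (AffineSubspace K V)) (Z : AffineSubspace K V) : Prop :=
  Z ∈ poset A ∧ ∀ X ∈ poset A, rk Z + rk X = rk (lmeet A Z X) + rk (Z ⊓ X)

/-- The intersection poset of the restriction `B^W = {H ∩ W : H ∈ B, H ∩ W ≠ ∅}`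
of the arrangement `B` to the affine subspace `W`, realized as a finset of affine
subspaces of the ambient space (with minimal element `W`). -/
noncomputable def tracePoset (B : Finset (AffineSubspace K V)) (W : AffineSubspace K V) :
    Finset (AffineSubspace K V) :=
  (((B.filter fun H => H ⊓ W ≠ ⊥).image fun H => H ⊓ W).powerset.image
      fun S => W ⊓ S.inf id).filter (· ≠ ⊥)

/-- A modular subarrangement `B ⊆ A`: `L(B)`, viewed as a subposet of `L(A)`,
is a modular ideal of `L(A)`. -/
def IsModularSub (A B : Finset (AffineSubspace K V)) : Prop :=
  B ⊆ A ∧ IsModularIdeal A (poset B)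

end HypArr

namespace HypArr

section Lattice

variable {K V : Type*} [Field K] [AddCommGroup V] [Module K V]
  {A : Finset (AffineSubspace K V)}

lemma mem_poset_iff {X : AffineSubspace K V} :
    X ∈ poset A ↔ (∃ S ⊆ A, S.inf id = X) ∧ X ≠ ⊥ := by
  simp only [poset, Finset.mem_filter, Finset.mem_image, Finset.mem_powerset]

lemma top_mem_poset : (⊤ : AffineSubspace K V) ∈ poset A :=
  mem_poset_iff.2 ⟨⟨∅, Finset.empty_subset A, Finset.inf_empty⟩, top_ne_bot⟩

lemma inf_id_le_of_mem_poset {X : AffineSubspace K V} (hX : X ∈ poset A) :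
    A.inf id ≤ X := by
  obtain ⟨⟨S, hS, rfl⟩, -⟩ := mem_poset_iff.1 hX
  exact Finset.inf_mono hS

lemma inf_mem_poset (hc : IsCentral A) {X Y : AffineSubspace K V}
    (hX : X ∈ poset A) (hY : Y ∈ poset A) : X ⊓ Y ∈ poset A := by
  obtain ⟨⟨S, hS, rfl⟩, -⟩ := mem_poset_iff.1 hX
  obtain ⟨⟨T, hT, rfl⟩, -⟩ := mem_poset_iff.1 hY
  refine mem_poset_iff.2 ⟨⟨S ∪ T, Finset.union_subset hS hT, Finset.inf_union⟩, fun h => ?_⟩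
  exact hc (le_bot_iff.1 (h ▸ le_inf (Finset.inf_mono hS) (Finset.inf_mono hT)))

lemma finset_inf_mem_poset (hc : IsCentral A) {T : Finset (AffineSubspace K V)}
    (hT : T ⊆ poset A) : T.inf id ∈ poset A := by
  induction T using Finset.induction_on with
  | empty => exact top_mem_poset
  | insert a s _ ih =>
    rw [Finset.inf_insert]
    exact inf_mem_poset hc (hT (Finset.mem_insert_self a s))
      (ih fun x hx => hT (Finset.mem_insert_of_mem hx))

lemma lmeet_eq_finset_inf (X Y : AffineSubspace K V) :
    lmeet A X Y = ((poset A).filter fun W => X ≤ W ∧ Y ≤ W).inf id := by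
  rw [lmeet, Finset.inf_id_eq_sInf]
  congr 1
  ext W
  simp

lemma lmeet_mem_poset (hc : IsCentral A) (X Y : AffineSubspace K V) :
    lmeet A X Y ∈ poset A := by
  rw [lmeet_eq_finset_inf]
  exact finset_inf_mem_poset hc (Finset.filter_subset _ _)

lemma le_lmeet_left (X Y : AffineSubspace K V) : X ≤ lmeet A X Y :=
  le_sInf fun _ hW => hW.2.1

lemma le_lmeet_right (X Y : AffineSubspace K V) : Y ≤ lmeet A X Y :=
  le_sInf fun _ hW => hW.2.2

lemma lmeet_le {X Y W : AffineSubspace K V} (hW : W ∈ poset A) (hXW : X ≤ W) (hYW : Y ≤ W) :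
    lmeet A X Y ≤ W :=
  sInf_le ⟨hW, hXW, hYW⟩

lemma lmeet_mono {X X' Y Y' : AffineSubspace K V} (hX : X ≤ X') (hY : Y ≤ Y') :
    lmeet A X Y ≤ lmeet A X' Y' :=
  le_sInf fun _ hW => sInf_le ⟨hW.1, hX.trans hW.2.1, hY.trans hW.2.2⟩

lemma lmeet_eq_top_mono {X X' Y Y' : AffineSubspace K V} (hX : X ≤ X') (hY : Y ≤ Y')
    (h : lmeet A X Y = ⊤) : lmeet A X' Y' = ⊤ :=
  top_le_iff.1 (h ▸ lmeet_mono hX hY)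

end Lattice

section Ideals

variable {K V : Type*} [Field K] [AddCommGroup V] [Module K V]
  {A : Finset (AffineSubspace K V)}

lemma mem_principal {X Y : AffineSubspace K V} : Y ∈ principal A X ↔ Y ∈ poset A ∧ X ≤ Y :=
  Finset.mem_filter

lemma mem_meetCompl {I : Finset (AffineSubspace K V)} {Y : AffineSubspace K V} :
    Y ∈ meetCompl A I ↔ Y ∈ poset A ∧ ∀ X ∈ I, lmeet A X Y = ⊤ :=
  Finset.mem_filter

lemma isIdeal_principal (X : AffineSubspace K V) : IsIdeal A (principal A X) :=
  ⟨Finset.filter_subset _ _, fun _ hY _ hW hYW =>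
    mem_principal.2 ⟨hW, (mem_principal.1 hY).2.trans hYW⟩⟩

lemma isIdeal_meetCompl (I : Finset (AffineSubspace K V)) : IsIdeal A (meetCompl A I) :=
  ⟨Finset.filter_subset _ _, fun _ hY _ hW hYW =>
    mem_meetCompl.2 ⟨hW, fun X hX => lmeet_eq_top_mono le_rfl hYW ((mem_meetCompl.1 hY).2 X hX)⟩⟩

lemma principal_inter_principal (X Y : AffineSubspace K V) :
    principal A X ∩ principal A Y = principal A (lmeet A X Y) := by
  ext W
  simp only [Finset.mem_inter, mem_principal]
  constructor
  · rintro ⟨⟨hW, hXW⟩, -, hYW⟩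
    exact ⟨hW, lmeet_le hW hXW hYW⟩
  · rintro ⟨hW, hLW⟩
    exact ⟨⟨hW, (le_lmeet_left X Y).trans hLW⟩, hW, (le_lmeet_right X Y).trans hLW⟩

lemma principal_subset_meetCompl_principal {X Y : AffineSubspace K V}
    (h : lmeet A X Y = ⊤) : principal A Y ⊆ meetCompl A (principal A X) := fun _ hW =>
  mem_meetCompl.2 ⟨(mem_principal.1 hW).1, fun _ hX' =>
    lmeet_eq_top_mono (mem_principal.1 hX').2 (mem_principal.1 hW).2 h⟩

end Ideals

section Rank

variable {K V : Type*} [Field K] [AddCommGroup V] [Module K V]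

lemma rk_top : rk (⊤ : AffineSubspace K V) = 0 := by
  rw [rk, AffineSubspace.direction_top, finrank_top, Nat.sub_self]

variable [FiniteDimensional K V]

lemma rk_anti {X Y : AffineSubspace K V} (h : X ≤ Y) : rk Y ≤ rk X :=
  Nat.sub_le_sub_left (Submodule.finrank_mono (AffineSubspace.direction_le h)) _

lemma rk_inf_le_add_of_mem {X Y : AffineSubspace K V} {p : V} (hpX : p ∈ X) (hpY : p ∈ Y) :
    rk (X ⊓ Y) ≤ rk X + rk Y := by
  have hdir := AffineSubspace.direction_inf_of_mem hpX hpY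
  have hsum := Submodule.finrank_sup_add_finrank_inf_eq X.direction Y.direction
  have hsup := Submodule.finrank_le (X.direction ⊔ Y.direction)
  have hX := Submodule.finrank_le X.direction
  have hY := Submodule.finrank_le Y.direction
  unfold rk
  rw [hdir]
  omega

lemma IsCentral.rk_inf_le_add {A : Finset (AffineSubspace K V)} (hc : IsCentral A)
    {X Y : AffineSubspace K V} (hX : X ∈ poset A) (hY : Y ∈ poset A) :
    rk (X ⊓ Y) ≤ rk X + rk Y := by
  obtain ⟨p, hp⟩ := (AffineSubspace.nonempty_iff_ne_bot (A.inf id)).2 hc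
  exact rk_inf_le_add_of_mem (inf_id_le_of_mem_poset hX hp) (inf_id_le_of_mem_poset hY hp)

end Rank

section ModularElement

variable {K V : Type*} [Field K] [AddCommGroup V] [Module K V]
  {A : Finset (AffineSubspace K V)} {Z : AffineSubspace K V}

lemma IsModularElement.rk_inf_of_lmeet_eq_top (hZ : IsModularElement A Z)
    {Y : AffineSubspace K V} (hY : Y ∈ poset A) (hZY : lmeet A Z Y = ⊤) :
    rk (Z ⊓ Y) = rk Z + rk Y := by
  simpa [hZY, rk_top] using (hZ.2 Y hY).symm

variable [FiniteDimensional K V]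

/-- Modularity at `Y` and at `X ⊓ Y` give `rk X + rk Y ≤ rk (X ⊓ Y)`, since
`lmeet A Z (X ⊓ Y) ≤ X`; centrality gives the reverse inequality. -/
lemma IsModularElement.rk_inf_eq_add (hZ : IsModularElement A Z) (hc : IsCentral A)
    {X Y : AffineSubspace K V} (hX : X ∈ poset A) (hZX : Z ≤ X)
    (hY : Y ∈ poset A) (hZY : lmeet A Z Y = ⊤) :
    rk (X ⊓ Y) = rk X + rk Y := by
  have hZY_rk := hZ.rk_inf_of_lmeet_eq_top hY hZY
  have hmod := hZ.2 (X ⊓ Y) (inf_mem_poset hc hX hY)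
  rw [← inf_assoc, inf_eq_left.2 hZX] at hmod
  have hlmeet : rk X ≤ rk (lmeet A Z (X ⊓ Y)) := rk_anti (lmeet_le hX hZX inf_le_left)
  have hsub := hc.rk_inf_le_add hX hY
  omega

end ModularElement

theorem principal_isModularIdeal_of_modularElement_general
    {K V : Type*} [Field K] [AddCommGroup V] [Module K V] [FiniteDimensional K V]
    (A : Finset (AffineSubspace K V)) (hc : IsCentral A)
    (Z : AffineSubspace K V) (hZ : IsModularElement A Z) :
    IsModularIdeal A (principal A Z) := by
  refine ⟨Fin.forall_fin_two.2 ⟨isIdeal_principal Z, isIdeal_meetCompl _⟩,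
    fun X hX hXtop => ?_, fun f hf => ?_, fun f hf => ?_⟩
  · by_cases h : lmeet A Z X = ⊤
    · exact ⟨1, X, hX, hXtop, Finset.inter_eq_right.2 (principal_subset_meetCompl_principal h)⟩
    · exact ⟨0, lmeet A Z X, lmeet_mem_poset hc Z X, h, principal_inter_principal Z X⟩
  all_goals
    obtain ⟨hf0, hZf0⟩ := mem_principal.1 (hf 0)
    obtain ⟨hf1, hZf1⟩ := mem_meetCompl.1 (hf 1)
    rw [Finset.univ_fin2, Finset.inf_insert, Finset.inf_singleton]
  · exact (mem_poset_iff.1 (inf_mem_poset hc hf0 hf1)).2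
  · rw [Finset.sum_pair zero_ne_one]
    exact hZ.rk_inf_eq_add hc hf0 hZf0 hf1 (hZf1 Z (mem_principal.2 ⟨hZ.1, le_rfl⟩))

/-- **Proposition.** In a central arrangement, the principal ideal generated by a
modular element is a modular ideal. -/
theorem principal_isModularIdeal_of_modularElement
    {K V : Type*} [Field K] [AddCommGroup V] [Module K V] [FiniteDimensional K V]
    (A : Finset (AffineSubspace K V)) (hA : IsArrangement A) (hc : IsCentral A)
    (Z : AffineSubspace K V) (hZ : IsModularElement A Z) :
    IsModularIdeal A (principal A Z) :=
  principal_isModularIdeal_of_modularElement_general A hc Z hZ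

end HypArr
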